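/- The set E = {0} ∪ ⋃_{n=2}^∞ [n^{−n−1/2}, n^{−n}] ⊆ ℝ does not have uniform density type (UDT). -/
import Mathlib

open MeasureTheory Set Filter Topology

/-- The set `{0} ∪ ⋃_{n ≥ 2} [n^{-n-1/2}, n^{-n}]`. -/
noncomputable def Eset : Set ℝ :=
  {0} ∪ ⋃ n : ℕ, ⋃ (_ : 2 ≤ n), Set.Icc ((n : ℝ) ^ (-(n : ℝ) - 1/2)) ((n : ℝ) ^ (-(n : ℝ)))

/-- `E^{γ,δ}`: points `x` such that for every `r ∈ (0, δ]`, the one-sided density of `E`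
on one of `(x-r,x)`, `(x,x+r)` is at least `γ`. -/
noncomputable def densSet (E : Set ℝ) (γ δ : ℝ) : Set ℝ :=
  {x : ℝ | ∀ r ∈ Set.Ioc (0 : ℝ) δ,
    max ((volume (Set.Ioo (x - r) x ∩ E)).toReal / r)
        ((volume (Set.Ioo x (x + r) ∩ E)).toReal / r) ≥ γ}

/-- `E` has uniform density type. -/
def UDT (E : Set ℝ) : Prop :=
  ∃ γ δ : ℕ → ℝ, StrictMono γ ∧ Tendsto γ atTop (𝓝 1) ∧
    StrictAnti δ ∧ Tendsto δ atTop (𝓝 0) ∧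
    E ⊆ ⋂ k : ℕ, ⋃ n, ⋃ (_ : n ≥ k), densSet E (γ n) (δ n)

lemma Eset_subset_Ici : Eset ⊆ Set.Ici (0:ℝ) := by
  rintro x (rfl | hx)
  · exact Set.mem_Ici.2 le_rfl
  · simp only [Set.mem_iUnion] at hx
    obtain ⟨n, hn, hx⟩ := hx
    have hn0 : (0:ℝ) < n := by exact_mod_cast Nat.lt_of_lt_of_le (by norm_num) hn
    exact le_of_lt (lt_of_lt_of_le (Real.rpow_pos_of_pos hn0 _) hx.1)

/-- key containment: points of Eset below `a_m` are at most `b_{m+1}`. -/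
lemma Eset_key (m : ℕ) (hm : 2 ≤ m) :
    Set.Ioo (0:ℝ) ((m:ℝ) ^ (-(m:ℝ) - 1/2)) ∩ Eset ⊆
      Set.Ioc 0 (((m:ℝ) + 1) ^ (-((m:ℝ) + 1))) := by
  rintro x ⟨⟨hx0, hxa⟩, (rfl | hx)⟩
  · exact absurd hx0 (lt_irrefl 0)
  · simp only [Set.mem_iUnion] at hx
    obtain ⟨j, hj2, hja, hjb⟩ := hx
    have hj0 : (0:ℝ) < j := by exact_mod_cast Nat.lt_of_lt_of_le (by norm_num) hj2
    have hm0 : (0:ℝ) < m := by exact_mod_cast Nat.lt_of_lt_of_le (by norm_num) hm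
    -- j > m
    have hjm : m < j := by
      by_contra hc
      push_neg at hc
      have hcast : (j:ℝ) ≤ m := by exact_mod_cast hc
      have h1 : (m:ℝ) ^ (-(m:ℝ) - 1/2) ≤ (m:ℝ) ^ (-(j:ℝ) - 1/2) :=
        Real.rpow_le_rpow_of_exponent_le (by exact_mod_cast Nat.one_le_of_lt hm)
          (by linarith)
      have h2 : (m:ℝ) ^ (-(j:ℝ) - 1/2) ≤ (j:ℝ) ^ (-(j:ℝ) - 1/2) :=
        Real.rpow_le_rpow_of_nonpos hj0 hcast (by linarith)
      linarith [le_trans (le_trans h1 h2) hja]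
    have hjm' : (m:ℝ) + 1 ≤ j := by exact_mod_cast hjm
    -- x ≤ b_{m+1}
    have h3 : (j:ℝ) ^ (-(j:ℝ)) ≤ (j:ℝ) ^ (-((m:ℝ)+1)) :=
      Real.rpow_le_rpow_of_exponent_le (by exact_mod_cast Nat.one_le_of_lt hj2)
        (by linarith)
    have h4 : (j:ℝ) ^ (-((m:ℝ)+1)) ≤ ((m:ℝ)+1) ^ (-((m:ℝ)+1)) :=
      Real.rpow_le_rpow_of_nonpos (by linarith) hjm' (by linarith)
    exact ⟨hx0, le_trans hjb (le_trans h3 h4)⟩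

/-- The set `{0} ∪ ⋃_{n ≥ 2} [n^{-n-1/2}, n^{-n}]` does not have uniform density type. -/
theorem Eset_not_UDT : ¬ UDT Eset := by
  rintro ⟨γ, δ, hγmono, hγlim, hδanti, hδlim, hsub⟩
  -- pick k with γ k > 1/2
  have h12 : ∀ᶠ n in atTop, (1:ℝ)/2 < γ n :=
    hγlim.eventually (eventually_gt_nhds (by norm_num))
  obtain ⟨k, hk⟩ := h12.exists
  -- 0 ∈ Eset
  have h0E : (0:ℝ) ∈ Eset := Or.inl rfl
  have h0 := hsub h0E
  rw [Set.mem_iInter] at h0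
  have h0k := h0 k
  simp only [Set.mem_iUnion] at h0k
  obtain ⟨n, hnk, hdn⟩ := h0k
  -- δ n > 0
  have hδnonneg : ∀ i, (0:ℝ) ≤ δ i := fun i =>
    le_of_tendsto hδlim (eventually_atTop.2 ⟨i, fun j hj => hδanti.antitone hj⟩)
  have hδpos : 0 < δ n := lt_of_le_of_lt (hδnonneg (n+1)) (hδanti (Nat.lt_succ_self n))
  -- choose m
  obtain ⟨m0, hm0⟩ := exists_nat_gt (1 / δ n)
  set m : ℕ := max m0 16 with hmdef
  have hm16 : 16 ≤ m := le_max_right _ _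
  have hm2 : 2 ≤ m := le_trans (by norm_num) hm16
  have hmR : (16:ℝ) ≤ m := by exact_mod_cast hm16
  have hm0R : (0:ℝ) < m := by linarith
  have hm1R : (1:ℝ) ≤ m := by linarith
  set a : ℝ := (m:ℝ) ^ (-(m:ℝ) - 1/2) with ha
  have hapos : 0 < a := Real.rpow_pos_of_pos hm0R _
  -- a ≤ δ n
  have haδ : a ≤ δ n := by
    have h1 : a ≤ (m:ℝ) ^ (-1:ℝ) :=
      Real.rpow_le_rpow_of_exponent_le hm1R (by linarith)
    have h2 : (m:ℝ) ^ (-1:ℝ) = 1 / m := by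
      rw [Real.rpow_neg_one]; ring
    have hmδ : 1/δ n < (m:ℝ) := lt_of_lt_of_le hm0 (by exact_mod_cast le_max_left m0 16)
    have h5 : (1:ℝ)/m ≤ δ n := by
      rw [div_le_iff₀ hm0R]
      rw [div_lt_iff₀ hδpos] at hmδ
      nlinarith
    linarith
  -- apply density at r = a
  have hdens := hdn a ⟨hapos, haδ⟩
  -- left interval empty
  have hleft : Set.Ioo (0 - a) 0 ∩ Eset = ∅ := by
    ext x
    simp only [Set.mem_inter_iff, Set.mem_Ioo, Set.mem_empty_iff_false, iff_false]
    rintro ⟨⟨_, hx0⟩, hxE⟩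
    exact absurd (Eset_subset_Ici hxE) (not_le.2 hx0)
  -- right bound
  set b : ℝ := ((m:ℝ) + 1) ^ (-((m:ℝ) + 1)) with hb
  have hbpos : 0 < b := Real.rpow_pos_of_pos (by linarith) _
  have hvol : (volume (Set.Ioo (0:ℝ) (0 + a) ∩ Eset)).toReal ≤ b := by
    have hss : Set.Ioo (0:ℝ) (0 + a) ∩ Eset ⊆ Set.Ioc 0 b := by
      rw [zero_add]; exact Eset_key m hm2
    calc (volume (Set.Ioo (0:ℝ) (0 + a) ∩ Eset)).toReal
        ≤ (volume (Set.Ioc (0:ℝ) b)).toReal := by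
          apply ENNReal.toReal_mono
          · rw [Real.volume_Ioc]; exact ENNReal.ofReal_ne_top
          · exact measure_mono hss
      _ = b := by rw [Real.volume_Ioc, ENNReal.toReal_ofReal (by linarith)]; ring
  -- b ≤ a * m^{-1/2} ≤ a/4
  have hba : b ≤ a / 4 := by
    have h1 : b ≤ (m:ℝ) ^ (-((m:ℝ)+1)) :=
      Real.rpow_le_rpow_of_nonpos hm0R (by linarith) (by linarith)
    have h2 : (m:ℝ) ^ (-((m:ℝ)+1)) = a * (m:ℝ) ^ (-(1:ℝ)/2) := by
      rw [ha, ← Real.rpow_add hm0R]; ring_nf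
    have h3 : (m:ℝ) ^ (-(1:ℝ)/2) ≤ (16:ℝ) ^ (-(1:ℝ)/2) :=
      Real.rpow_le_rpow_of_nonpos (by norm_num) hmR (by norm_num)
    have h4 : (16:ℝ) ^ (-(1:ℝ)/2) = 1/4 := by
      rw [show (-(1:ℝ)/2) = -(1/2) by ring, Real.rpow_neg (by norm_num),
        ← Real.sqrt_eq_rpow, show (16:ℝ) = 4^2 by norm_num, Real.sqrt_sq (by norm_num)]
      norm_num
    calc b ≤ a * (m:ℝ) ^ (-(1:ℝ)/2) := by rw [← h2]; exact h1
      _ ≤ a * (1/4) := by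
          apply mul_le_mul_of_nonneg_left _ hapos.le
          rw [← h4]; exact h3
      _ = a / 4 := by ring
  -- conclude
  have hγn : (1:ℝ)/2 < γ n := lt_of_lt_of_le hk (hγmono.monotone hnk)
  have hmax := hdens
  rw [hleft] at hmax
  simp only [measure_empty, ENNReal.toReal_zero, zero_div] at hmax
  have hright : (volume (Set.Ioo (0:ℝ) (0 + a) ∩ Eset)).toReal / a ≤ 1/4 := by
    rw [div_le_iff₀ hapos]
    linarith
  have : γ n ≤ max 0 ((volume (Set.Ioo (0:ℝ) (0 + a) ∩ Eset)).toReal / a) := hmax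
  have hmle : max (0:ℝ) ((volume (Set.Ioo (0:ℝ) (0 + a) ∩ Eset)).toReal / a) ≤ 1/4 :=
    max_le (by norm_num) hright
  linarith
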